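/- arXiv:1303.0727 — 3 statements merged into one kernel-verified Lean document; each statement's English description precedes it below -/
import Mathlib

section
/- Let μ₀ and μ₁ be Borel probability measures on [0,1] whose cumulative distribution functions G(x) = μ₀([0,x]) and G̃(x) = μ₁([0,x]) are twice continuously differentiable on [0,1], and let π₀, π₁ ≥ 0 with π₀ + π₁ = 1. For odd t ≥ 1 define err_t = π₀·(1 − ∫₀¹ B(t,θ,(t−1)/2) dμ₀(θ)) + π₁·∫₀¹ B(t,θ,(t−1)/2) dμ₁(θ). Let err* = π₀(1 − G(1/2)) + π₁ G̃(1/2) and c = (π₁/8)·G̃''(1/2) − (π₀/8)·G''(1/2). Then as t → ∞ through odd values, t·(err_t − err*) → c; equivalently, err_t = err* + c/t + o(1/t). -/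
open MeasureTheory Filter Topology

/-- The `Binomial(t,θ)` cumulative distribution function evaluated at `k`:
`B(t,θ,k) = ∑_{j=0}^{k} C(t,j) θ^j (1−θ)^{t−j}`. -/
noncomputable def binCdf (t : ℕ) (θ : ℝ) (k : ℕ) : ℝ :=
  ∑ j ∈ Finset.range (k + 1), (t.choose j : ℝ) * θ ^ j * (1 - θ) ^ (t - j)


section Aux
open intervalIntegral Set

lemma betaNat (a b : ℕ) : ∫ x in (0:ℝ)..1, x ^ a * (1 - x) ^ b
    = (a.factorial * b.factorial : ℝ) / (a + b + 1).factorial := by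
  induction a generalizing b with
  | zero =>
    simp only [pow_zero, one_mul]
    rw [intervalIntegral.integral_comp_sub_left (fun x => x ^ b) 1]
    have hb : (b:ℝ) + 1 ≠ 0 := by positivity
    have hf : (b.factorial:ℝ) ≠ 0 := by positivity
    simp [integral_pow, Nat.factorial]
    field_simp
  | succ n ih =>
    have hb : (b:ℝ) + 1 ≠ 0 := by positivity
    have hparts : ∫ x in (0:ℝ)..1, x ^ (n+1) * (1 - x) ^ b
        = ((n+1 : ℝ) / (b+1)) * ∫ x in (0:ℝ)..1, x ^ n * (1 - x) ^ (b+1) := by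
      have h := intervalIntegral.integral_mul_deriv_eq_deriv_mul
        (u := fun x : ℝ => x ^ (n+1)) (u' := fun x : ℝ => (n+1) * x ^ n)
        (v := fun x : ℝ => -(1 - x) ^ (b+1) / (b+1)) (v' := fun x : ℝ => (1 - x) ^ b)
        (a := 0) (b := 1)
        (fun x _ => by simpa using (hasDerivAt_pow (n+1) x))
        (fun x _ => by
          have h1 : HasDerivAt (fun y : ℝ => (1 - y)) (-1) x := by
            simpa using ((hasDerivAt_id x).const_sub 1)
          have h2 : HasDerivAt (fun y : ℝ => (1 - y) ^ (b+1))
              (((b:ℝ)+1) * (1 - x) ^ b * (-1)) x := by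
            simpa using (h1.fun_pow (b+1))
          have h4 := (h2.div_const ((b:ℝ)+1)).fun_neg
          have heq : -(((b:ℝ)+1) * (1 - x) ^ b * -1 / ((b:ℝ)+1)) = (1-x)^b := by
            rw [mul_neg_one, neg_div, neg_neg, mul_comm, mul_div_assoc, div_self hb, mul_one]
          have h5 : HasDerivAt (fun x : ℝ => -(1 - x) ^ (b+1) / ((b:ℝ)+1))
              (-(((b:ℝ)+1) * (1 - x) ^ b * -1 / ((b:ℝ)+1))) x := by
            simpa only [neg_div] using h4
          simpa only [heq] using h5)
        (by apply Continuous.intervalIntegrable; continuity)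
        (by apply Continuous.intervalIntegrable; continuity)
      rw [h]
      have hthis : ∀ x : ℝ, ((n:ℝ)+1) * x ^ n * (-(1 - x) ^ (b+1) / (b+1))
          = (-((n:ℝ)+1) / (b+1)) * (x ^ n * (1 - x) ^ (b+1)) := by
        intro x; field_simp
      simp only [hthis]
      rw [intervalIntegral.integral_const_mul]
      norm_num
      ring
    rw [hparts, ih (b+1)]
    have h1 : ((n + (b+1) + 1).factorial : ℝ) = ((n + 1 + b + 1).factorial : ℝ) := by
      norm_num; ring_nf
    rw [h1]
    have h2 : ((n+1).factorial : ℝ) = (n+1) * n.factorial := by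
      push_cast [Nat.factorial_succ]; ring
    have h3 : ((b+1).factorial : ℝ) = (b+1) * b.factorial := by
      push_cast [Nat.factorial_succ]; ring
    rw [h2, h3]
    have h4 : ((n + 1 + b + 1).factorial : ℝ) ≠ 0 := by positivity
    field_simp

noncomputable def cm (m : ℕ) : ℝ := (2*m+1 : ℝ) * ((2*m).choose m : ℝ)

lemma choose_eq (m : ℕ) :
    ((2*m).choose m : ℝ) = ((2*m).factorial : ℝ) / (m.factorial * m.factorial) := by
  have h := Nat.choose_mul_factorial_mul_factorial (show m ≤ 2*m by omega)
  have h2 : 2*m - m = m := by omega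
  rw [h2] at h
  have hm : (m.factorial : ℝ) ≠ 0 := by positivity
  field_simp
  rw [sq, ← mul_assoc]
  exact_mod_cast h

lemma factR_succ (n : ℕ) : ((n+1).factorial : ℝ) = (n+1) * n.factorial := by
  rw [Nat.factorial_succ]; push_cast; ring

/-- `∫ cm m * x^(m+k) (1-x)^(m+k) = cm m * ((m+k)!)² / (2(m+k)+1)!` -/
lemma pintk (m k : ℕ) : ∫ x in (0:ℝ)..1, cm m * (x^(m+k) * (1-x)^(m+k))
    = cm m * (((m+k).factorial : ℝ) * (m+k).factorial / ((2*(m+k)+1).factorial)) := by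
  rw [intervalIntegral.integral_const_mul, betaNat]
  have h : m + k + (m+k) + 1 = 2*(m+k)+1 := by omega
  rw [h]

lemma pintk0 (m : ℕ) : ∫ x in (0:ℝ)..1, cm m * (x^m * (1-x)^m) = 1 := by
  have h := pintk m 0
  simp only [Nat.add_zero] at h
  rw [h, cm, choose_eq]
  have e1 : (2*m+1 : ℕ).factorial = (2*m+1) * (2*m).factorial := Nat.factorial_succ _
  have hm : (m.factorial : ℝ) ≠ 0 := by positivity
  have h2m : (((2*m).factorial : ℕ) : ℝ) ≠ 0 := by positivity
  rw [e1]; push_cast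
  field_simp

lemma pintk1 (m : ℕ) : ∫ x in (0:ℝ)..1, cm m * (x^(m+1) * (1-x)^(m+1))
    = ((m:ℝ)+1) / (2*(2*(m:ℝ)+3)) := by
  have h := pintk m 1
  rw [h, cm, choose_eq]
  have e3 : (2*(m+1)+1 : ℕ).factorial = (2*m+3) * ((2*m+2) * ((2*m+1) * (2*m).factorial)) := by
    have : 2*(m+1)+1 = ((2*m+1+1)+1) := by omega
    rw [this, Nat.factorial_succ, Nat.factorial_succ, Nat.factorial_succ]
  rw [e3, factR_succ]
  have hm : (m.factorial : ℝ) ≠ 0 := by positivity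
  have h2m : (((2*m).factorial : ℕ) : ℝ) ≠ 0 := by positivity
  have c1 : (2*(m:ℝ)+3) ≠ 0 := by positivity
  have c2 : (2*(m:ℝ)+2) ≠ 0 := by positivity
  have c3 : (2*(m:ℝ)+1) ≠ 0 := by positivity
  push_cast
  field_simp

lemma pintk2 (m : ℕ) : ∫ x in (0:ℝ)..1, cm m * (x^(m+2) * (1-x)^(m+2))
    = ((m:ℝ)+1) * ((m:ℝ)+2) / (4*(2*(m:ℝ)+3)*(2*(m:ℝ)+5)) := by
  have h := pintk m 2
  rw [h, cm, choose_eq]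
  have e3 : (2*(m+2)+1 : ℕ).factorial
      = (2*m+5) * ((2*m+4) * ((2*m+3) * ((2*m+2) * ((2*m+1) * (2*m).factorial)))) := by
    have : 2*(m+2)+1 = ((((2*m+1+1)+1)+1)+1) := by omega
    rw [this]
    rw [Nat.factorial_succ, Nat.factorial_succ, Nat.factorial_succ, Nat.factorial_succ,
      Nat.factorial_succ]
  have e4 : (m+2 : ℕ).factorial = (m+2) * ((m+1) * m.factorial) := by
    rw [Nat.factorial_succ, Nat.factorial_succ]
  rw [e3, e4]
  have hm : (m.factorial : ℝ) ≠ 0 := by positivity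
  have h2m : (((2*m).factorial : ℕ) : ℝ) ≠ 0 := by positivity
  have c1 : (2*(m:ℝ)+3) ≠ 0 := by positivity
  have c2 : (2*(m:ℝ)+2) ≠ 0 := by positivity
  have c3 : (2*(m:ℝ)+1) ≠ 0 := by positivity
  have c4 : (2*(m:ℝ)+4) ≠ 0 := by positivity
  have c5 : (2*(m:ℝ)+5) ≠ 0 := by positivity
  push_cast
  field_simp
  ring

lemma pintA (m : ℕ) : ∫ x in (0:ℝ)..1, cm m * (x^(m+1) * (1-x)^m) = 1/2 := by
  rw [intervalIntegral.integral_const_mul, betaNat, cm, choose_eq]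
  have e : (m+1+m+1 : ℕ).factorial = (2*m+2) * ((2*m+1) * (2*m).factorial) := by
    have : m+1+m+1 = ((2*m+1)+1) := by omega
    rw [this, Nat.factorial_succ, Nat.factorial_succ]
  rw [e, factR_succ]
  have hm : (m.factorial : ℝ) ≠ 0 := by positivity
  have h2m : (((2*m).factorial : ℕ) : ℝ) ≠ 0 := by positivity
  have c2 : (2*(m:ℝ)+2) ≠ 0 := by positivity
  have c3 : (2*(m:ℝ)+1) ≠ 0 := by positivity
  push_cast
  field_simp

lemma int_cmul (r : ℝ) (f : ℝ → ℝ) (v : ℝ) (h : ∫ x in (0:ℝ)..1, f x = v) :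
    ∫ x in (0:ℝ)..1, r * f x = r * v := by
  rw [intervalIntegral.integral_const_mul, h]

lemma contInt (f : ℝ → ℝ) (hf : Continuous f) : IntervalIntegrable f volume 0 1 :=
  hf.intervalIntegrable 0 1

lemma mom1 (m : ℕ) : ∫ x in (0:ℝ)..1, cm m * (x^m * (1-x)^m) * (x - 1/2) = 0 := by
  have hfun : (fun x : ℝ => cm m * (x^m * (1-x)^m) * (x - 1/2))
      = fun x : ℝ => cm m * (x^(m+1) * (1-x)^m) - (1/2) * (cm m * (x^m * (1-x)^m)) := by
    funext x; ring
  rw [hfun, intervalIntegral.integral_sub (contInt _ (by fun_prop)) (contInt _ (by fun_prop)),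
    pintA, int_cmul (1/2) _ 1 (pintk0 m)]
  norm_num

lemma mom2 (m : ℕ) : ∫ x in (0:ℝ)..1, cm m * (x^m * (1-x)^m) * (x - 1/2)^2
    = 1 / (4*(2*(m:ℝ)+3)) := by
  have hfun : (fun x : ℝ => cm m * (x^m * (1-x)^m) * (x - 1/2)^2)
      = fun x : ℝ => (1/4) * (cm m * (x^m * (1-x)^m)) - cm m * (x^(m+1) * (1-x)^(m+1)) := by
    funext x; ring
  rw [hfun, intervalIntegral.integral_sub (contInt _ (by fun_prop)) (contInt _ (by fun_prop)),
    int_cmul (1/4) _ 1 (pintk0 m), pintk1]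
  have c1 : (2*(m:ℝ)+3) ≠ 0 := by positivity
  field_simp
  ring

lemma mom4 (m : ℕ) : ∫ x in (0:ℝ)..1, cm m * (x^m * (1-x)^m) * (x - 1/2)^4
    = 3 / (16*(2*(m:ℝ)+3)*(2*(m:ℝ)+5)) := by
  have hfun : (fun x : ℝ => cm m * (x^m * (1-x)^m) * (x - 1/2)^4)
      = fun x : ℝ => ((1/16) * (cm m * (x^m * (1-x)^m))
          - (1/2) * (cm m * (x^(m+1) * (1-x)^(m+1))))
          + cm m * (x^(m+2) * (1-x)^(m+2)) := by
    funext x; ring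
  rw [hfun, intervalIntegral.integral_add (((contInt _ (by fun_prop)).sub (contInt _ (by fun_prop)))) (contInt _ (by fun_prop)),
    intervalIntegral.integral_sub (contInt _ (by fun_prop)) (contInt _ (by fun_prop)),
    int_cmul (1/16) _ 1 (pintk0 m), int_cmul (1/2) _ _ (pintk1 m), pintk2]
  have c1 : (2*(m:ℝ)+3) ≠ 0 := by positivity
  have c5 : (2*(m:ℝ)+5) ≠ 0 := by positivity
  field_simp
  ring

lemma quad_bound {f f' f'' : ℝ → ℝ} {c δ ε : ℝ} (hδ : 0 < δ) (hε : 0 ≤ ε)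
    (hd1 : ∀ u ∈ Ioo (c-δ) (c+δ), HasDerivAt f (f' u) u)
    (hd2 : ∀ u ∈ Ioo (c-δ) (c+δ), HasDerivAt f' (f'' u) u)
    (h0 : f c = 0) (h0' : f' c = 0)
    (hb : ∀ u ∈ Ioo (c-δ) (c+δ), |f'' u| ≤ ε) :
    ∀ x ∈ Ioo (c-δ) (c+δ), |f x| ≤ ε * (x - c)^2 := by
  intro x hx
  obtain ⟨hx1, hx2⟩ := hx
  have hmem : ∀ y : ℝ, c - δ < y → y < c + δ → y ∈ Ioo (c-δ) (c+δ) := fun y h1 h2 => ⟨h1, h2⟩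
  have hcm : c ∈ Ioo (c-δ) (c+δ) := ⟨by linarith, by linarith⟩
  rcases lt_trichotomy x c with hlt | heq | hgt
  · -- x < c
    have hsub : Icc x c ⊆ Ioo (c-δ) (c+δ) := fun y hy =>
      ⟨by cases hy; linarith, by cases hy; linarith⟩
    have hcont : ContinuousOn f (Icc x c) := fun y hy =>
      ((hd1 y (hsub hy)).continuousAt).continuousWithinAt
    obtain ⟨ξ, hξ, hslope⟩ := exists_hasDerivAt_eq_slope f f' hlt hcont
      (fun y hy => hd1 y (hsub (Ioo_subset_Icc_self hy)))
    -- f' ξ = (f c - f x)/(c - x)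
    have hne : c - x ≠ 0 := by intro h; apply absurd hlt; simp [show x = c by linarith]
    have hfx : f x = - f' ξ * (c - x) := by
      rw [hslope]
      field_simp [h0, hne]
      rw [h0]; ring
    have hξIoo : ξ ∈ Ioo (c-δ) (c+δ) := hsub (Ioo_subset_Icc_self hξ)
    have hsub2 : Icc ξ c ⊆ Ioo (c-δ) (c+δ) := fun y hy =>
      ⟨by cases hy; cases hξ; linarith, by cases hy; linarith⟩
    have hcont2 : ContinuousOn f' (Icc ξ c) := fun y hy =>
      ((hd2 y (hsub2 hy)).continuousAt).continuousWithinAt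
    have hξc : ξ < c := hξ.2
    obtain ⟨η, hη, hslope2⟩ := exists_hasDerivAt_eq_slope f' f'' hξc hcont2
      (fun y hy => hd2 y (hsub2 (Ioo_subset_Icc_self hy)))
    have hne2 : c - ξ ≠ 0 := by intro h; apply absurd hξc; simp [show ξ = c by linarith]
    have hf'ξ : f' ξ = - f'' η * (c - ξ) := by
      rw [hslope2]
      field_simp [h0', hne2]
      rw [h0']; ring
    have hηb : |f'' η| ≤ ε := hb η (hsub2 (Ioo_subset_Icc_self hη))
    rw [hfx, hf'ξ]
    have h1 : |(- (- f'' η * (c - ξ))) * (c - x)| = |f'' η| * (c - ξ) * (c - x) := by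
      rw [abs_mul, abs_neg, abs_mul, abs_neg]
      rw [abs_of_nonneg (by linarith : (0:ℝ) ≤ c - ξ), abs_of_nonneg (by linarith : (0:ℝ) ≤ c - x)]
    calc |(-(- f'' η * (c - ξ))) * (c - x)| = |f'' η| * (c - ξ) * (c - x) := h1
      _ ≤ ε * (c - x) * (c - x) := by
          have hcx : (0:ℝ) ≤ c - x := by linarith
          have hcξ : c - ξ ≤ c - x := by cases hξ; linarith
          have h2 : (0:ℝ) ≤ c - ξ := by linarith
          have h3 : |f'' η| * (c - ξ) ≤ ε * (c - x) := mul_le_mul hηb hcξ h2 hε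
          exact mul_le_mul_of_nonneg_right h3 hcx
      _ = ε * (x - c)^2 := by ring
  · simp [heq, h0]
  · -- c < x
    have hsub : Icc c x ⊆ Ioo (c-δ) (c+δ) := fun y hy =>
      ⟨by cases hy; linarith, by cases hy; linarith⟩
    have hcont : ContinuousOn f (Icc c x) := fun y hy =>
      ((hd1 y (hsub hy)).continuousAt).continuousWithinAt
    obtain ⟨ξ, hξ, hslope⟩ := exists_hasDerivAt_eq_slope f f' hgt hcont
      (fun y hy => hd1 y (hsub (Ioo_subset_Icc_self hy)))
    have hne : x - c ≠ 0 := by intro h; apply absurd hgt; simp [show x = c by linarith]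
    have hfx : f x = f' ξ * (x - c) := by
      rw [hslope]
      field_simp [h0, hne]
      rw [h0]; ring
    have hsub2 : Icc c ξ ⊆ Ioo (c-δ) (c+δ) := fun y hy =>
      ⟨by cases hy; linarith, by cases hy; cases hξ; linarith⟩
    have hcont2 : ContinuousOn f' (Icc c ξ) := fun y hy =>
      ((hd2 y (hsub2 hy)).continuousAt).continuousWithinAt
    have hcξ : c < ξ := hξ.1
    obtain ⟨η, hη, hslope2⟩ := exists_hasDerivAt_eq_slope f' f'' hcξ hcont2
      (fun y hy => hd2 y (hsub2 (Ioo_subset_Icc_self hy)))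
    have hne2 : ξ - c ≠ 0 := by intro h; apply absurd hcξ; simp [show ξ = c by linarith]
    have hf'ξ : f' ξ = f'' η * (ξ - c) := by
      rw [hslope2]
      field_simp [h0', hne2]
      rw [h0']; ring
    have hηb : |f'' η| ≤ ε := hb η (hsub2 (Ioo_subset_Icc_self hη))
    rw [hfx, hf'ξ]
    have h1 : |f'' η * (ξ - c) * (x - c)| = |f'' η| * (ξ - c) * (x - c) := by
      rw [abs_mul, abs_mul]
      rw [abs_of_nonneg (by cases hξ; linarith : (0:ℝ) ≤ ξ - c),
        abs_of_nonneg (by linarith : (0:ℝ) ≤ x - c)]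
    calc |f'' η * (ξ - c) * (x - c)| = |f'' η| * (ξ - c) * (x - c) := h1
      _ ≤ ε * (x - c) * (x - c) := by
          have hxc : (0:ℝ) ≤ x - c := by linarith
          have hξx : ξ - c ≤ x - c := by cases hξ; linarith
          have h2 : (0:ℝ) ≤ ξ - c := by cases hξ; linarith
          have h3 : |f'' η| * (ξ - c) ≤ ε * (x - c) := mul_le_mul hηb hξx h2 hε
          exact mul_le_mul_of_nonneg_right h3 hxc
      _ = ε * (x - c)^2 := by ring

lemma oneSub_pow_hasDeriv (n : ℕ) (θ : ℝ) :
    HasDerivAt (fun y : ℝ => (1 - y) ^ n) (-(n * (1 - θ) ^ (n-1))) θ := by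
  have h1 : HasDerivAt (fun y : ℝ => (1 - y)) (-1) θ := by
    simpa using ((hasDerivAt_id θ).const_sub 1)
  simpa [mul_comm] using h1.fun_pow n

lemma binCdf_hasDerivAt (t : ℕ) : ∀ k, k < t → ∀ θ : ℝ,
    HasDerivAt (fun θ => binCdf t θ k)
      (-((t : ℝ) * ((t-1).choose k : ℝ) * (θ^k * (1-θ)^(t-1-k)))) θ := by
  intro k
  induction k with
  | zero =>
    intro hk θ
    have hfun : (fun θ : ℝ => binCdf t θ 0) = fun θ : ℝ => (1 - θ)^t := by
      funext y; simp [binCdf]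
    rw [hfun]
    have := oneSub_pow_hasDeriv t θ
    convert this using 1
    simp
  | succ k ih =>
    intro hk θ
    have hk' : k < t := by omega
    have hIH := ih hk' θ
    have hterm : HasDerivAt
        (fun θ : ℝ => (t.choose (k+1) : ℝ) * θ^(k+1) * (1-θ)^(t-(k+1)))
        ((t.choose (k+1) : ℝ) * (((k:ℝ)+1) * θ^k * (1-θ)^(t-(k+1))
          + θ^(k+1) * (-((t-(k+1) : ℕ) * (1-θ)^(t-(k+1)-1))))) θ := by
      have h1 : HasDerivAt (fun y : ℝ => y^(k+1)) (((k:ℝ)+1) * θ^k) θ := by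
        simpa using hasDerivAt_pow (k+1) θ
      have h2 := oneSub_pow_hasDeriv (t-(k+1)) θ
      have h3 := h1.fun_mul h2
      have h4 := h3.const_mul ((t.choose (k+1) : ℝ))
      convert h4 using 2
      · rfl
      · rfl
      ring
    have hfun : (fun θ : ℝ => binCdf t θ (k+1))
        = fun θ : ℝ => binCdf t θ k + (t.choose (k+1) : ℝ) * θ^(k+1) * (1-θ)^(t-(k+1)) := by
      funext y; simp [binCdf, Finset.sum_range_succ]
    rw [hfun]
    have hadd := hIH.fun_add hterm
    convert hadd using 1
    · rfl
    · rfl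
    -- value identity
    have e1 : t - 1 - k = t - (k+1) := by omega
    have e2 : t - (k+1) - 1 = t - 1 - (k+1) := by omega
    rw [e1, e2]
    have id1 : ((t : ℝ) * ((t-1).choose k : ℝ)) = ((t.choose (k+1) : ℝ)) * ((k:ℝ)+1) := by
      have h := Nat.add_one_mul_choose_eq (t-1) k
      have ht : t - 1 + 1 = t := by omega
      rw [ht] at h
      exact_mod_cast h
    have id2 : ((t.choose (k+1) : ℝ)) * ((t-(k+1) : ℕ) : ℝ)
        = ((t-1).choose (k+1) : ℝ) * (t : ℝ) := by
      have h := Nat.choose_mul_succ_eq (t-1) (k+1)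
      have ht : t - 1 + 1 = t := by omega
      rw [ht] at h
      exact_mod_cast h.symm
    push_cast
    linear_combination (θ^k * (1-θ)^(t-(k+1))) * id1 + (θ^(k+1) * (1-θ)^(t-1-(k+1))) * id2

lemma binCdf_one (t k : ℕ) (hk : k < t) : binCdf t 1 k = 0 := by
  unfold binCdf
  apply Finset.sum_eq_zero
  intro j hj
  have : t - j ≠ 0 := by
    simp only [Finset.mem_range] at hj; omega
  simp [this, zero_pow this]

lemma binCdf_eq_integral (t k : ℕ) (hk : k < t) (θ : ℝ) :
    binCdf t θ k = ∫ x in θ..1, (t : ℝ) * ((t-1).choose k : ℝ) * (x^k * (1-x)^(t-1-k)) := by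
  have h : ∀ x ∈ Set.uIcc θ 1, HasDerivAt (fun y => -binCdf t y k)
      ((t:ℝ)*((t-1).choose k)*(x^k*(1-x)^(t-1-k))) x := by
    intro x _
    simpa using (binCdf_hasDerivAt t k hk x).fun_neg
  have hint : IntervalIntegrable
      (fun x : ℝ => (t:ℝ)*((t-1).choose k)*(x^k*(1-x)^(t-1-k))) volume θ 1 :=
    (by fun_prop : Continuous _).intervalIntegrable θ 1
  have := intervalIntegral.integral_eq_sub_of_hasDerivAt h hint
  rw [this, binCdf_one t k hk]
  ring

lemma fubini_binCdf (μ : Measure ℝ) [IsProbabilityMeasure μ]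
    (G : ℝ → ℝ) (hG : ∀ x, G x = (μ (Set.Icc 0 x)).toReal)
    (t k : ℕ) (hk : k < t) :
    ∫ θ in Set.Icc (0:ℝ) 1, binCdf t θ k ∂μ
      = ∫ x in (0:ℝ)..1, ((t:ℝ) * ((t-1).choose k : ℝ) * (x^k * (1-x)^(t-1-k))) * G x := by
  set g : ℝ → ℝ := fun x => (t:ℝ) * ((t-1).choose k : ℝ) * (x^k * (1-x)^(t-1-k)) with hg
  have hgc : Continuous g := by fun_prop
  set I : Set ℝ := Set.Icc (0:ℝ) 1 with hI
  have hIm : MeasurableSet I := measurableSet_Icc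
  set F : ℝ → ℝ → ℝ := fun θ x => if θ ≤ x then g x else 0 with hF
  -- Step 1 : pointwise identity for θ ∈ I
  have step1 : ∀ θ ∈ I, binCdf t θ k = ∫ x in I, F θ x ∂volume := by
    intro θ hθ
    obtain ⟨hθ0, hθ1⟩ := hθ
    have h1 : binCdf t θ k = ∫ x in Set.Ioc θ 1, g x ∂volume := by
      rw [binCdf_eq_integral t k hk θ, intervalIntegral.integral_of_le hθ1]
    have h2 : (fun x => F θ x) = Set.indicator (Set.Ici θ) g := by
      funext x
      simp [hF, Set.indicator_apply, Set.mem_Ici]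
    have h3 : ∫ x in I, F θ x ∂volume = ∫ x in I ∩ Set.Ici θ, g x ∂volume := by
      rw [show (fun x => F θ x) = Set.indicator (Set.Ici θ) g from h2]
      exact MeasureTheory.setIntegral_indicator measurableSet_Ici
    have h4 : I ∩ Set.Ici θ = Set.Icc θ 1 := by
      ext y
      simp only [hI, Set.mem_inter_iff, Set.mem_Icc, Set.mem_Ici]
      constructor
      · rintro ⟨⟨_, hy1⟩, hy2⟩; exact ⟨hy2, hy1⟩
      · rintro ⟨hy1, hy2⟩; exact ⟨⟨le_trans hθ0 hy1, hy2⟩, hy1⟩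
    rw [h1, h3, h4, MeasureTheory.integral_Icc_eq_integral_Ioc]
  -- Step 2 : rewrite LHS
  have step2 : ∫ θ in I, binCdf t θ k ∂μ = ∫ θ in I, (∫ x in I, F θ x ∂volume) ∂μ := by
    apply MeasureTheory.setIntegral_congr_fun hIm
    intro θ hθ
    exact step1 θ hθ
  -- Integrability on product
  obtain ⟨B, hB⟩ := (isCompact_Icc : IsCompact I).exists_bound_of_continuousOn
    (hgc.continuousOn : ContinuousOn g I)
  have hfin1 : IsFiniteMeasure (volume.restrict I) := by
    constructor
    rw [Measure.restrict_apply_univ]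
    simp [hI]
  have hfin2 : IsFiniteMeasure (μ.restrict I) := by
    constructor
    rw [Measure.restrict_apply_univ]
    exact measure_lt_top μ I
  have hmeas : AEStronglyMeasurable (Function.uncurry F)
      ((μ.restrict I).prod (volume.restrict I)) := by
    apply Measurable.aestronglyMeasurable
    have huncurry : Function.uncurry F
        = Set.indicator {p : ℝ × ℝ | p.1 ≤ p.2} (fun p => g p.2) := by
      funext p
      simp [Function.uncurry, hF, Set.indicator_apply, Set.mem_setOf_eq]
    rw [huncurry]
    exact Measurable.indicator (hgc.measurable.comp measurable_snd)
      (measurableSet_le measurable_fst measurable_snd)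
  have hFP : Integrable (Function.uncurry F) ((μ.restrict I).prod (volume.restrict I)) := by
    apply Integrable.mono' (integrable_const (max B 0)) hmeas
    rw [Measure.prod_restrict]
    refine (ae_restrict_iff' (hIm.prod hIm)).2 (ae_of_all _ ?_)
    intro p hp
    obtain ⟨hp1, hp2⟩ := hp
    simp only [Function.uncurry, hF]
    split_ifs
    · exact le_trans (hB p.2 hp2) (le_max_left _ _)
    · simp
  have swap := MeasureTheory.integral_integral_swap hFP
  rw [step2, swap]
  have step4 : ∫ x in I, (∫ θ in I, F θ x ∂μ) ∂volume = ∫ x in I, g x * G x ∂volume := by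
    apply MeasureTheory.setIntegral_congr_fun hIm
    intro x hx
    show (∫ θ in I, F θ x ∂μ) = g x * G x
    have h5 : (fun θ => F θ x) = Set.indicator (Set.Iic x) (fun _ => g x) := by
      funext θ
      simp [hF, Set.indicator_apply, Set.mem_Iic]
    rw [h5, MeasureTheory.setIntegral_indicator measurableSet_Iic,
      MeasureTheory.setIntegral_const]
    have h6 : I ∩ Set.Iic x = Set.Icc 0 x := by
      ext y
      simp only [hI, Set.mem_inter_iff, Set.mem_Iic, Set.mem_Icc]
      obtain ⟨hx0, hx1⟩ := hx
      constructor
      · rintro ⟨⟨hy2, _⟩, hy1⟩; exact ⟨hy2, hy1⟩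
      · rintro ⟨hy1, hy2⟩; exact ⟨⟨hy1, le_trans hy2 hx1⟩, hy2⟩
    rw [h6, hG x]
    simp [mul_comm, Measure.real]
  rw [step4, intervalIntegral.integral_of_le (by norm_num : (0:ℝ) ≤ 1),
    ← MeasureTheory.integral_Icc_eq_integral_Ioc]

lemma cm_nonneg (m : ℕ) : 0 ≤ cm m := by
  unfold cm; positivity

lemma t2_tendsto (C : ℝ) (hC : 0 ≤ C) :
    Tendsto (fun m : ℕ => (2*(m:ℝ)+1) * (C * (3/(16*(2*(m:ℝ)+3)*(2*(m:ℝ)+5)))))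
      atTop (𝓝 0) := by
  refine squeeze_zero (g := fun m : ℕ => (3*C/16) * (1/((m:ℝ)+1)))
    (fun m => by positivity) ?_
    (by simpa using tendsto_one_div_add_atTop_nhds_zero_nat.const_mul (3*C/16))
  intro m
  have h3 : (0:ℝ) < 2*(m:ℝ)+3 := by positivity
  have h5 : (0:ℝ) < 2*(m:ℝ)+5 := by positivity
  have heq3 : (2*(m:ℝ)+1) * (C * (3/(16*(2*(m:ℝ)+3)*(2*(m:ℝ)+5))))
      = (3*C/16) * ((2*(m:ℝ)+1)/((2*(m:ℝ)+3)*(2*(m:ℝ)+5))) := by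
    field_simp
  rw [heq3]
  have hratio : (2*(m:ℝ)+1)/((2*(m:ℝ)+3)*(2*(m:ℝ)+5)) ≤ 1/((m:ℝ)+1) := by
    rw [div_le_div_iff₀ (by positivity) (by positivity)]
    nlinarith [Nat.cast_nonneg (α := ℝ) m,
      mul_nonneg (Nat.cast_nonneg (α := ℝ) m) (Nat.cast_nonneg (α := ℝ) m)]
  exact mul_le_mul_of_nonneg_left hratio (by positivity)

lemma key_tendsto (G : ℝ → ℝ) (hGsmooth : ContDiffOn ℝ 2 G (Set.Icc 0 1)) :
    Tendsto (fun m : ℕ =>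
        (2*(m:ℝ)+1) * ((∫ x in (0:ℝ)..1, (cm m * (x^m*(1-x)^m)) * G x) - G (1/2)))
      atTop (𝓝 (deriv (deriv G) (1/2) / 8)) := by
  have hopen : IsOpen (Ioo (0:ℝ) 1) := isOpen_Ioo
  have hG1 : ContDiffOn ℝ 2 G (Ioo 0 1) := hGsmooth.mono Ioo_subset_Icc_self
  have hd1 : ∀ u ∈ Ioo (0:ℝ) 1, HasDerivAt G (deriv G u) u := by
    intro u hu
    exact ((hG1.differentiableOn (by norm_num) u hu).differentiableAt
      (hopen.mem_nhds hu)).hasDerivAt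
  have hG2 : ContDiffOn ℝ 1 (deriv G) (Ioo 0 1) :=
    hG1.deriv_of_isOpen hopen (by norm_num)
  have hd2 : ∀ u ∈ Ioo (0:ℝ) 1, HasDerivAt (deriv G) (deriv (deriv G) u) u := by
    intro u hu
    exact ((hG2.differentiableOn (by norm_num) u hu).differentiableAt
      (hopen.mem_nhds hu)).hasDerivAt
  have hcont2 : ContinuousOn (deriv (deriv G)) (Ioo 0 1) :=
    hG2.continuousOn_deriv_of_isOpen hopen (by norm_num)
  have hhalf : (1/2 : ℝ) ∈ Ioo (0:ℝ) 1 := by norm_num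
  have hcontat : ContinuousAt (deriv (deriv G)) (1/2) :=
    hcont2.continuousAt (hopen.mem_nhds hhalf)
  set a : ℝ := deriv G (1/2) with ha
  set b : ℝ := deriv (deriv G) (1/2) with hb
  set R : ℝ → ℝ := fun x => G x - G (1/2) - a*(x-1/2) - b/2*(x-1/2)^2 with hR
  have hGcont : ContinuousOn G (Icc 0 1) := hGsmooth.continuousOn
  have hRcont : ContinuousOn R (Icc 0 1) := by
    apply ContinuousOn.sub
    apply ContinuousOn.sub
    apply ContinuousOn.sub hGcont
    · exact continuousOn_const
    · exact (continuous_const.mul ((continuous_id.sub continuous_const))).continuousOn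
    · exact (continuous_const.mul (((continuous_id.sub continuous_const)).pow 2)).continuousOn
  -- integrability helpers
  have hIcc : Set.uIcc (0:ℝ) 1 = Icc 0 1 := Set.uIcc_of_le (by norm_num)
  have hp_cont : ∀ m : ℕ, Continuous (fun x : ℝ => cm m * (x^m*(1-x)^m)) := by
    intro m; fun_prop
  have hpR_int : ∀ m : ℕ, IntervalIntegrable
      (fun x => (cm m * (x^m*(1-x)^m)) * R x) volume 0 1 := by
    intro m
    apply ContinuousOn.intervalIntegrable
    rw [hIcc]
    exact ((hp_cont m).continuousOn).mul hRcont
  -- split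
  have hsplit : ∀ m : ℕ, (∫ x in (0:ℝ)..1, (cm m * (x^m*(1-x)^m)) * G x) - G (1/2)
      = b/2 * (1/(4*(2*(m:ℝ)+3))) + ∫ x in (0:ℝ)..1, (cm m * (x^m*(1-x)^m)) * R x := by
    intro m
    have hGx : ∀ x : ℝ, (cm m * (x^m*(1-x)^m)) * G x
        = G (1/2) * (cm m * (x^m*(1-x)^m))
          + a * (cm m * (x^m*(1-x)^m) * (x-1/2))
          + b/2 * (cm m * (x^m*(1-x)^m) * (x-1/2)^2)
          + (cm m * (x^m*(1-x)^m)) * R x := by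
      intro x
      simp only [hR]
      ring
    rw [intervalIntegral.integral_congr (g := fun x =>
        G (1/2) * (cm m * (x^m*(1-x)^m))
          + a * (cm m * (x^m*(1-x)^m) * (x-1/2))
          + b/2 * (cm m * (x^m*(1-x)^m) * (x-1/2)^2)
          + (cm m * (x^m*(1-x)^m)) * R x) (fun x _ => hGx x)]
    have i1 : IntervalIntegrable (fun x : ℝ => G (1/2) * (cm m * (x^m*(1-x)^m))) volume 0 1 :=
      (by fun_prop : Continuous _).intervalIntegrable 0 1
    have i2 : IntervalIntegrable (fun x : ℝ => a * (cm m * (x^m*(1-x)^m) * (x-1/2))) volume 0 1 :=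
      (by fun_prop : Continuous _).intervalIntegrable 0 1
    have i3 : IntervalIntegrable (fun x : ℝ => b/2 * (cm m * (x^m*(1-x)^m) * (x-1/2)^2))
        volume 0 1 := (by fun_prop : Continuous _).intervalIntegrable 0 1
    rw [intervalIntegral.integral_add ((i1.add i2).add i3) (hpR_int m),
      intervalIntegral.integral_add (i1.add i2) i3,
      intervalIntegral.integral_add i1 i2,
      int_cmul (G (1/2)) _ 1 (pintk0 m), int_cmul a _ 0 (mom1 m),
      int_cmul (b/2) _ _ (mom2 m)]
    ring
  -- first summand limit
  have hlim1 : Tendsto (fun m : ℕ => (2*(m:ℝ)+1) * (b/2 * (1/(4*(2*(m:ℝ)+3)))))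
      atTop (𝓝 (b/8)) := by
    have heq : ∀ m : ℕ, (2*(m:ℝ)+1) * (b/2 * (1/(4*(2*(m:ℝ)+3))))
        = b/8 - (b/4) * (1/(2*(m:ℝ)+3)) := by
      intro m
      have h3 : (2*(m:ℝ)+3) ≠ 0 := by positivity
      field_simp
      ring
    simp only [heq]
    have h0 : Tendsto (fun m : ℕ => 1/(2*(m:ℝ)+3)) atTop (𝓝 0) := by
      refine squeeze_zero (g := fun m : ℕ => 1/((m:ℝ)+1)) (fun m => by positivity) ?_
        tendsto_one_div_add_atTop_nhds_zero_nat
      intro m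
      apply div_le_div_of_nonneg_left (by norm_num) (by positivity)
      linarith [Nat.cast_nonneg (α := ℝ) m]
    have := (h0.const_mul (b/4)).const_sub (b/8)
    simpa using this
  -- second summand limit : (2m+1) * ∫ p R → 0
  have hlim2 : Tendsto (fun m : ℕ => (2*(m:ℝ)+1) * ∫ x in (0:ℝ)..1, (cm m * (x^m*(1-x)^m)) * R x)
      atTop (𝓝 0) := by
    rw [NormedAddCommGroup.tendsto_nhds_zero]
    intro ε hε
    -- global bound K
    obtain ⟨K, hK⟩ := (isCompact_Icc : IsCompact (Icc (0:ℝ) 1)).exists_bound_of_continuousOn hRcont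
    set K' : ℝ := max K 1 with hK'
    have hK'pos : 0 < K' := lt_of_lt_of_le one_pos (le_max_right _ _)
    have hKbound : ∀ x ∈ Icc (0:ℝ) 1, |R x| ≤ K' := fun x hx =>
      le_trans (hK x hx) (le_max_left _ _)
    -- local quadratic bound
    have hR0 : R (1/2) = 0 := by simp [hR]
    set R' : ℝ → ℝ := fun u => deriv G u - a - b*(u-1/2) with hR'
    have hR'0 : R' (1/2) = 0 := by simp only [hR']; rw [ha]; ring
    obtain ⟨δ', hδ'pos, hδ'⟩ := Metric.continuousAt_iff.1 hcontat (ε/2) (by positivity)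
    set δ : ℝ := min (δ'/2) (1/4) with hδdef
    have hδpos : 0 < δ := lt_min (by positivity) (by norm_num)
    have hδle : δ ≤ 1/4 := min_le_right _ _
    have hsubIoo : Ioo (1/2 - δ) (1/2 + δ) ⊆ Ioo (0:ℝ) 1 := by
      intro u hu
      obtain ⟨h1, h2⟩ := hu
      constructor <;> [linarith; linarith]
    have hRd1 : ∀ u ∈ Ioo (1/2 - δ) (1/2 + δ), HasDerivAt R (R' u) u := by
      intro u hu
      have h := hd1 u (hsubIoo hu)
      have h2 : HasDerivAt (fun x : ℝ => G x - G (1/2) - a*(x-1/2) - b/2*(x-1/2)^2)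
          (deriv G u - 0 - a*1 - b/2*(2*(u-1/2)^1*1)) u := by
        apply HasDerivAt.sub
        apply HasDerivAt.sub
        apply HasDerivAt.sub h (hasDerivAt_const u (G (1/2)))
        · exact ((hasDerivAt_id u).sub_const _).const_mul a
        · exact (((hasDerivAt_id u).sub_const _).pow 2).const_mul (b/2)
      convert h2 using 1
      simp only [hR']
      ring
    have hRd2 : ∀ u ∈ Ioo (1/2 - δ) (1/2 + δ), HasDerivAt R' (deriv (deriv G) u - b) u := by
      intro u hu
      have h := hd2 u (hsubIoo hu)
      have h2 : HasDerivAt (fun x : ℝ => deriv G x - a - b*(x-1/2))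
          (deriv (deriv G) u - 0 - b*1) u := by
        apply HasDerivAt.sub
        apply HasDerivAt.sub h (hasDerivAt_const u a)
        · exact ((hasDerivAt_id u).sub_const _).const_mul b
      convert h2 using 1
      ring
    have hbnd : ∀ u ∈ Ioo (1/2 - δ) (1/2 + δ), |deriv (deriv G) u - b| ≤ ε/2 := by
      intro u hu
      obtain ⟨h1, h2⟩ := hu
      have : dist u (1/2) < δ' := by
        rw [Real.dist_eq]
        have : |u - 1/2| < δ := abs_sub_lt_iff.2 ⟨by linarith, by linarith⟩
        have hδδ' : δ < δ' := lt_of_le_of_lt (min_le_left _ _) (by linarith)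
        linarith
      have := hδ' this
      rw [Real.dist_eq] at this
      exact le_of_lt this
    have hquad := quad_bound hδpos (by positivity) hRd1 hRd2 hR0 hR'0 hbnd
    -- combined bound for all x ∈ [0,1]
    have hcomb : ∀ x ∈ Icc (0:ℝ) 1, |R x| ≤ ε/2 * (x-1/2)^2 + K'/δ^4 * (x-1/2)^4 := by
      intro x hx
      by_cases hcase : |x - 1/2| < δ
      · have hxIoo : x ∈ Ioo (1/2 - δ) (1/2 + δ) := by
          rw [abs_sub_lt_iff] at hcase
          exact ⟨by linarith [hcase.1, hcase.2], by linarith [hcase.1, hcase.2]⟩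
        have := hquad x hxIoo
        have h2 : (0:ℝ) ≤ K'/δ^4 * (x-1/2)^4 := by positivity
        linarith
      · push_neg at hcase
        have h4 : δ^4 ≤ (x-1/2)^4 := by
          calc δ^4 ≤ |x-1/2|^4 := pow_le_pow_left₀ (le_of_lt hδpos) hcase 4
            _ = (x-1/2)^4 := by rw [pow_abs, abs_of_nonneg (by positivity)]
        have h5 : K' ≤ K'/δ^4 * (x-1/2)^4 := by
          rw [div_mul_eq_mul_div, le_div_iff₀ (by positivity)]
          calc K' * δ^4 ≤ K' * (x-1/2)^4 := by
                exact mul_le_mul_of_nonneg_left h4 (le_of_lt hK'pos)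
            _ = K' * (x-1/2)^4 := rfl
        have h6 : (0:ℝ) ≤ ε/2 * (x-1/2)^2 := by positivity
        linarith [hKbound x hx]
    -- bound the integral
    have hint_bound : ∀ m : ℕ, |∫ x in (0:ℝ)..1, (cm m * (x^m*(1-x)^m)) * R x|
        ≤ ε/2 * (1/(4*(2*(m:ℝ)+3))) + K'/δ^4 * (3/(16*(2*(m:ℝ)+3)*(2*(m:ℝ)+5))) := by
      intro m
      have habs : |∫ x in (0:ℝ)..1, (cm m * (x^m*(1-x)^m)) * R x|
          ≤ ∫ x in (0:ℝ)..1, |(cm m * (x^m*(1-x)^m)) * R x| :=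
        intervalIntegral.abs_integral_le_integral_abs (by norm_num)
      have hmono : ∫ x in (0:ℝ)..1, |(cm m * (x^m*(1-x)^m)) * R x|
          ≤ ∫ x in (0:ℝ)..1, (ε/2 * (cm m * (x^m*(1-x)^m) * (x-1/2)^2)
              + K'/δ^4 * (cm m * (x^m*(1-x)^m) * (x-1/2)^4)) := by
        apply intervalIntegral.integral_mono_on (by norm_num)
        · exact (hpR_int m).abs
        · exact (by fun_prop : Continuous _).intervalIntegrable 0 1
        · intro x hx
          have hpnn : 0 ≤ cm m * (x^m*(1-x)^m) := by
            obtain ⟨hx0, hx1⟩ := hx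
            have h1x : (0:ℝ) ≤ 1 - x := by linarith
            exact mul_nonneg (cm_nonneg m)
              (mul_nonneg (pow_nonneg hx0 m) (pow_nonneg h1x m))
          rw [abs_mul, abs_of_nonneg hpnn]
          calc cm m * (x^m*(1-x)^m) * |R x|
              ≤ cm m * (x^m*(1-x)^m) * (ε/2 * (x-1/2)^2 + K'/δ^4 * (x-1/2)^4) :=
                mul_le_mul_of_nonneg_left (hcomb x hx) hpnn
            _ = ε/2 * (cm m * (x^m*(1-x)^m) * (x-1/2)^2)
              + K'/δ^4 * (cm m * (x^m*(1-x)^m) * (x-1/2)^4) := by ring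
      have heval : ∫ x in (0:ℝ)..1, (ε/2 * (cm m * (x^m*(1-x)^m) * (x-1/2)^2)
              + K'/δ^4 * (cm m * (x^m*(1-x)^m) * (x-1/2)^4))
          = ε/2 * (1/(4*(2*(m:ℝ)+3))) + K'/δ^4 * (3/(16*(2*(m:ℝ)+3)*(2*(m:ℝ)+5))) := by
        rw [intervalIntegral.integral_add
            ((by fun_prop : Continuous _).intervalIntegrable 0 1)
            ((by fun_prop : Continuous _).intervalIntegrable 0 1),
          intervalIntegral.integral_const_mul, intervalIntegral.integral_const_mul,
          mom2, mom4]
      linarith [le_trans habs hmono, le_of_eq heval]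
    -- eventually small
    have hev1 : ∀ m : ℕ, (2*(m:ℝ)+1) * (ε/2 * (1/(4*(2*(m:ℝ)+3)))) ≤ ε/8 := by
      intro m
      have h3 : (0:ℝ) < 2*(m:ℝ)+3 := by positivity
      have heq2 : (2*(m:ℝ)+1) * (ε/2 * (1/(4*(2*(m:ℝ)+3)))) = ε/8 * ((2*(m:ℝ)+1)/(2*(m:ℝ)+3)) := by
        field_simp
        ring
      rw [heq2]
      have hr : (2*(m:ℝ)+1)/(2*(m:ℝ)+3) ≤ 1 := by
        rw [div_le_one h3]; linarith
      calc ε/8 * ((2*(m:ℝ)+1)/(2*(m:ℝ)+3)) ≤ ε/8 * 1 :=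
            mul_le_mul_of_nonneg_left hr (by positivity)
        _ = ε/8 := mul_one _
    set t2 : ℕ → ℝ := fun m => (2*(m:ℝ)+1) * (K'/δ^4 * (3/(16*(2*(m:ℝ)+3)*(2*(m:ℝ)+5))))
      with ht2def
    have ht2 : Tendsto t2 atTop (𝓝 0) := t2_tendsto (K'/δ^4) (by positivity)
    have hev2 : ∀ᶠ m in atTop, t2 m < ε/2 :=
      ht2.eventually_lt_const (by positivity : (0:ℝ) < ε/2)
    filter_upwards [hev2] with m hm
    have hnn : (0:ℝ) ≤ 2*(m:ℝ)+1 := by positivity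
    have hb1 := hint_bound m
    calc ‖(2*(m:ℝ)+1) * ∫ x in (0:ℝ)..1, (cm m * (x^m*(1-x)^m)) * R x‖
        = (2*(m:ℝ)+1) * |∫ x in (0:ℝ)..1, (cm m * (x^m*(1-x)^m)) * R x| := by
          rw [Real.norm_eq_abs, abs_mul, abs_of_nonneg hnn]
      _ ≤ (2*(m:ℝ)+1) * (ε/2 * (1/(4*(2*(m:ℝ)+3)))
            + K'/δ^4 * (3/(16*(2*(m:ℝ)+3)*(2*(m:ℝ)+5)))) :=
          mul_le_mul_of_nonneg_left hb1 hnn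
      _ = (2*(m:ℝ)+1) * (ε/2 * (1/(4*(2*(m:ℝ)+3)))) + t2 m := by
          simp only [ht2def]; ring
      _ < ε/8 + ε/2 := by
          have := hev1 m
          linarith
      _ ≤ ε := by linarith
  have hfinal : ∀ m : ℕ, (2*(m:ℝ)+1) * ((∫ x in (0:ℝ)..1, (cm m * (x^m*(1-x)^m)) * G x) - G (1/2))
      = (2*(m:ℝ)+1) * (b/2 * (1/(4*(2*(m:ℝ)+3))))
        + (2*(m:ℝ)+1) * ∫ x in (0:ℝ)..1, (cm m * (x^m*(1-x)^m)) * R x := by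
    intro m
    rw [hsplit m, mul_add]
  simp only [hfinal]
  have := hlim1.add hlim2
  simpa using this

lemma main_one (μ : Measure ℝ) [IsProbabilityMeasure μ]
    (G : ℝ → ℝ) (hG : ∀ x, G x = (μ (Set.Icc 0 x)).toReal)
    (hGsmooth : ContDiffOn ℝ 2 G (Set.Icc 0 1)) :
    Tendsto (fun m : ℕ => (((2*m+1 : ℕ) : ℝ))
        * ((∫ θ in Set.Icc (0:ℝ) 1, binCdf (2*m+1) θ m ∂μ) - G (1/2)))
      atTop (𝓝 (deriv (deriv G) (1/2) / 8)) := by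
  have hfub : ∀ m : ℕ, ∫ θ in Set.Icc (0:ℝ) 1, binCdf (2*m+1) θ m ∂μ
      = ∫ x in (0:ℝ)..1, (cm m * (x^m*(1-x)^m)) * G x := by
    intro m
    rw [fubini_binCdf μ G hG (2*m+1) m (by omega)]
    apply intervalIntegral.integral_congr
    intro x _
    have e1 : 2*m+1-1 = 2*m := by omega
    have e2 : 2*m - m = m := by omega
    rw [e1, e2]
    simp only [cm]
    push_cast
    ring
  have hcast : ∀ m : ℕ, (((2*m+1 : ℕ)) : ℝ) = 2*(m:ℝ)+1 := by
    intro m; push_cast; ring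
  simp only [hfub, hcast]
  exact key_tendsto G hGsmooth

lemma odd_filter : (atTop ⊓ 𝓟 {t : ℕ | Odd t}) = Filter.map (fun m => 2*m+1) atTop := by
  ext s
  rw [Filter.mem_inf_principal, Filter.mem_map]
  constructor
  · intro hs
    rw [Filter.mem_atTop_sets] at hs ⊢
    obtain ⟨N, hN⟩ := hs
    refine ⟨N, fun m hm => ?_⟩
    have h1 : 2*m+1 ≥ N := by omega
    have h2 : Odd (2*m+1) := ⟨m, by omega⟩
    exact hN (2*m+1) h1 h2
  · intro hs
    rw [Filter.mem_atTop_sets] at hs ⊢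
    obtain ⟨M, hM⟩ := hs
    refine ⟨2*M+1, fun t ht hodd => ?_⟩
    obtain ⟨k, hk⟩ := hodd
    have hkM : k ≥ M := by omega
    have := hM k hkM
    simpa [show 2*k+1 = t by omega] using this


end Aux

/-- Corollary 1: the test error of the majority vote of `t` classifiers satisfies
`err_t = err* + c/t + o(1/t)`, i.e. `t·(err_t − err*) → c` as `t → ∞` through odd
values, where `err_t = π₀·(1 − ∫₀¹ B(t,θ,(t−1)/2) dμ₀(θ)) + π₁·∫₀¹ B(t,θ,(t−1)/2) dμ₁(θ)`,
`err* = π₀(1 − G(1/2)) + π₁ G̃(1/2)` and `c = (π₁/8)·G̃''(1/2) − (π₀/8)·G''(1/2)`. -/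
theorem test_error_convergence_rate
    (μ₀ μ₁ : Measure ℝ) [IsProbabilityMeasure μ₀] [IsProbabilityMeasure μ₁]
    (hsupp₀ : μ₀ (Set.Icc 0 1) = 1) (hsupp₁ : μ₁ (Set.Icc 0 1) = 1)
    (G : ℝ → ℝ) (hG : ∀ x, G x = (μ₀ (Set.Icc 0 x)).toReal)
    (Gt : ℝ → ℝ) (hGt : ∀ x, Gt x = (μ₁ (Set.Icc 0 x)).toReal)
    (hGsmooth : ContDiffOn ℝ 2 G (Set.Icc 0 1))
    (hGtsmooth : ContDiffOn ℝ 2 Gt (Set.Icc 0 1))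
    (π₀ π₁ : ℝ) (hπ₀ : 0 ≤ π₀) (hπ₁ : 0 ≤ π₁) (hsum : π₀ + π₁ = 1)
    (err : ℕ → ℝ)
    (herr : ∀ t : ℕ, err t =
      π₀ * (1 - ∫ θ in Set.Icc (0:ℝ) 1, binCdf t θ ((t - 1) / 2) ∂μ₀)
      + π₁ * ∫ θ in Set.Icc (0:ℝ) 1, binCdf t θ ((t - 1) / 2) ∂μ₁)
    (errStar c : ℝ)
    (herrStar : errStar = π₀ * (1 - G (1/2)) + π₁ * Gt (1/2))
    (hc : c = (π₁/8) * deriv (deriv Gt) (1/2) - (π₀/8) * deriv (deriv G) (1/2)) :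
    Tendsto (fun t : ℕ => (t : ℝ) * (err t - errStar))
      (atTop ⊓ 𝓟 {t | Odd t}) (𝓝 c) := by
  rw [odd_filter, Filter.tendsto_map'_iff]
  have hidx : ∀ m : ℕ, (2*m+1-1)/2 = m := by intro m; omega
  have h0 := main_one μ₀ G hG hGsmooth
  have h1 := main_one μ₁ Gt hGt hGtsmooth
  have hcomb := (h1.const_mul π₁).add (h0.const_mul (-π₀))
  have heq : ((fun t : ℕ => (t : ℝ) * (err t - errStar)) ∘ (fun m => 2*m+1))
      = fun m : ℕ => π₁ * ((((2*m+1 : ℕ)) : ℝ)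
            * ((∫ θ in Set.Icc (0:ℝ) 1, binCdf (2*m+1) θ m ∂μ₁) - Gt (1/2)))
        + (-π₀) * ((((2*m+1 : ℕ)) : ℝ)
            * ((∫ θ in Set.Icc (0:ℝ) 1, binCdf (2*m+1) θ m ∂μ₀) - G (1/2))) := by
    funext m
    simp only [Function.comp_apply, herr (2*m+1), herrStar, hidx m]
    ring
  rw [heq]
  have hlimeq : π₁ * (deriv (deriv Gt) (1/2) / 8) + (-π₀) * (deriv (deriv G) (1/2) / 8) = c := by
    rw [hc]; ring
  rw [← hlimeq]
  exact hcomb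
end

section
/- Let μ₀ and μ₁ be Borel probability measures on [0,1] whose cumulative distribution functions G(x) = μ₀([0,x]) and G̃(x) = μ₁([0,x]) are twice continuously differentiable on [0,1], and let π₀, π₁ ≥ 0 with π₀ + π₁ = 1. For odd t ≥ 1 define err_t = π₀·(1 − ∫₀¹ B(t,θ,(t−1)/2) dμ₀(θ)) + π₁·∫₀¹ B(t,θ,(t−1)/2) dμ₁(θ). Then err_t converges, as t → ∞ through odd values, to err* = π₀(1 − G(1/2)) + π₁ G̃(1/2). -/
open MeasureTheory Filter Topology

lemma sum_full (t : ℕ) (θ : ℝ) :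
    ∑ j ∈ Finset.range (t+1), ((t.choose j : ℝ) * θ^j * (1-θ)^(t-j)) = 1 := by
  have h := add_pow θ (1-θ) t
  rw [show θ + (1-θ) = 1 by ring, one_pow] at h
  calc ∑ j ∈ Finset.range (t+1), ((t.choose j : ℝ) * θ^j * (1-θ)^(t-j))
      = ∑ j ∈ Finset.range (t+1), (θ^j * (1-θ)^(t-j) * (t.choose j : ℝ)) :=
        Finset.sum_congr rfl fun j _ => by ring
    _ = 1 := h.symm

lemma binCdf_nonneg {t k : ℕ} {θ : ℝ} (h0 : 0 ≤ θ) (h1 : θ ≤ 1) : 0 ≤ binCdf t θ k := by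
  apply Finset.sum_nonneg
  intro j _
  have : (0:ℝ) ≤ 1 - θ := by linarith
  positivity

lemma binCdf_le_one {t k : ℕ} {θ : ℝ} (hk : k ≤ t) (h0 : 0 ≤ θ) (h1 : θ ≤ 1) :
    binCdf t θ k ≤ 1 := by
  rw [← sum_full t θ]
  apply Finset.sum_le_sum_of_subset_of_nonneg (Finset.range_subset_range.2 (by omega))
  intro j _ _
  have : (0:ℝ) ≤ 1 - θ := by linarith
  positivity

lemma choose_sum_le (t : ℕ) (s : Finset ℕ) (hs : s ⊆ Finset.range (t+1)) :
    ∑ j ∈ s, ((t.choose j : ℝ)) ≤ 2^t := by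
  have h1 : ∑ j ∈ s, t.choose j ≤ ∑ j ∈ Finset.range (t+1), t.choose j :=
    Finset.sum_le_sum_of_subset hs
  rw [Nat.sum_range_choose] at h1
  calc ∑ j ∈ s, ((t.choose j : ℝ)) = ((∑ j ∈ s, t.choose j : ℕ) : ℝ) := by push_cast; ring
    _ ≤ ((2^t : ℕ) : ℝ) := by exact_mod_cast h1
    _ = 2^t := by push_cast; ring

lemma tail_bound (m : ℕ) {θ : ℝ} (h0 : 0 ≤ θ) (h2 : θ ≤ 1/2) :
    1 - binCdf (2*m+1) θ m ≤ 2*θ*(4*θ*(1-θ))^m := by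
  have hθθ : θ ≤ 1 - θ := by linarith
  have h1θ : (0:ℝ) ≤ 1 - θ := by linarith
  have hM : (0:ℝ) ≤ θ^(m+1) * (1-θ)^m := by positivity
  have hsplit : binCdf (2*m+1) θ m
      + ∑ j ∈ Finset.Ico (m+1) (2*m+2), (((2*m+1).choose j : ℝ) * θ^j * (1-θ)^(2*m+1-j)) = 1 := by
    rw [binCdf, Finset.sum_range_add_sum_Ico _ (by omega)]
    exact sum_full (2*m+1) θ
  have hterm : ∀ j ∈ Finset.Ico (m+1) (2*m+2),
      (((2*m+1).choose j : ℝ) * θ^j * (1-θ)^(2*m+1-j))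
        ≤ ((2*m+1).choose j : ℝ) * (θ^(m+1) * (1-θ)^m) := by
    intro j hj
    rw [Finset.mem_Ico] at hj
    obtain ⟨hj1, hj2⟩ := hj
    have hkey : θ^j * (1-θ)^(2*m+1-j) ≤ θ^(m+1) * (1-θ)^m := by
      have hj' : j = (m+1) + (j - (m+1)) := by omega
      have hm' : m = (j - (m+1)) + (m - (j - (m+1))) := by omega
      have he : 2*m+1-j = m - (j - (m+1)) := by omega
      calc θ^j * (1-θ)^(2*m+1-j)
          = θ^(m+1) * (θ^(j-(m+1)) * (1-θ)^(m-(j-(m+1)))) := by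
            rw [he]; nth_rewrite 1 [hj']; rw [pow_add]; ring
        _ ≤ θ^(m+1) * ((1-θ)^(j-(m+1)) * (1-θ)^(m-(j-(m+1)))) := by
            gcongr
        _ = θ^(m+1) * (1-θ)^m := by
            rw [← pow_add, show (j-(m+1)) + (m-(j-(m+1))) = m by omega]
    calc ((2*m+1).choose j : ℝ) * θ^j * (1-θ)^(2*m+1-j)
        = ((2*m+1).choose j : ℝ) * (θ^j * (1-θ)^(2*m+1-j)) := by ring
      _ ≤ ((2*m+1).choose j : ℝ) * (θ^(m+1) * (1-θ)^m) := by
          apply mul_le_mul_of_nonneg_left hkey (by positivity)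
  have hchoose := choose_sum_le (2*m+1) (Finset.Ico (m+1) (2*m+2))
    (by intro j hj; rw [Finset.mem_Ico] at hj; exact Finset.mem_range.2 (by omega))
  calc 1 - binCdf (2*m+1) θ m
      = ∑ j ∈ Finset.Ico (m+1) (2*m+2), (((2*m+1).choose j : ℝ) * θ^j * (1-θ)^(2*m+1-j)) := by
        linarith
    _ ≤ ∑ j ∈ Finset.Ico (m+1) (2*m+2), (((2*m+1).choose j : ℝ) * (θ^(m+1) * (1-θ)^m)) :=
        Finset.sum_le_sum hterm
    _ = (∑ j ∈ Finset.Ico (m+1) (2*m+2), ((2*m+1).choose j : ℝ)) * (θ^(m+1) * (1-θ)^m) := by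
        rw [← Finset.sum_mul]
    _ ≤ 2^(2*m+1) * (θ^(m+1) * (1-θ)^m) := mul_le_mul_of_nonneg_right hchoose hM
    _ = 2*θ*(4*θ*(1-θ))^m := by
        rw [mul_pow, mul_pow, show (4:ℝ) = 2^2 by norm_num, ← pow_mul, pow_succ, pow_succ]
        ring

lemma head_bound (m : ℕ) {θ : ℝ} (h2 : 1/2 ≤ θ) (h1 : θ ≤ 1) :
    binCdf (2*m+1) θ m ≤ 2*(1-θ)*(4*θ*(1-θ))^m := by
  have hθθ : 1 - θ ≤ θ := by linarith
  have h0 : (0:ℝ) ≤ θ := by linarith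
  have h1θ : (0:ℝ) ≤ 1 - θ := by linarith
  have hM : (0:ℝ) ≤ θ^m * (1-θ)^(m+1) := by positivity
  have hterm : ∀ j ∈ Finset.range (m+1),
      (((2*m+1).choose j : ℝ) * θ^j * (1-θ)^(2*m+1-j))
        ≤ ((2*m+1).choose j : ℝ) * (θ^m * (1-θ)^(m+1)) := by
    intro j hj
    rw [Finset.mem_range] at hj
    have hjm : j ≤ m := by omega
    have hkey : θ^j * (1-θ)^(2*m+1-j) ≤ θ^m * (1-θ)^(m+1) := by
      have he : 2*m+1-j = (m+1) + (m - j) := by omega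
      calc θ^j * (1-θ)^(2*m+1-j)
          = (1-θ)^(m+1) * (θ^j * (1-θ)^(m-j)) := by rw [he, pow_add]; ring
        _ ≤ (1-θ)^(m+1) * (θ^j * θ^(m-j)) := by
            gcongr
        _ = θ^m * (1-θ)^(m+1) := by rw [← pow_add, show j + (m-j) = m by omega]; ring
    calc ((2*m+1).choose j : ℝ) * θ^j * (1-θ)^(2*m+1-j)
        = ((2*m+1).choose j : ℝ) * (θ^j * (1-θ)^(2*m+1-j)) := by ring
      _ ≤ ((2*m+1).choose j : ℝ) * (θ^m * (1-θ)^(m+1)) :=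
          mul_le_mul_of_nonneg_left hkey (by positivity)
  have hchoose := choose_sum_le (2*m+1) (Finset.range (m+1))
    (Finset.range_subset_range.2 (by omega))
  calc binCdf (2*m+1) θ m
      ≤ ∑ j ∈ Finset.range (m+1), (((2*m+1).choose j : ℝ) * (θ^m * (1-θ)^(m+1))) :=
        Finset.sum_le_sum hterm
    _ = (∑ j ∈ Finset.range (m+1), ((2*m+1).choose j : ℝ)) * (θ^m * (1-θ)^(m+1)) := by
        rw [← Finset.sum_mul]
    _ ≤ 2^(2*m+1) * (θ^m * (1-θ)^(m+1)) := mul_le_mul_of_nonneg_right hchoose hM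
    _ = 2*(1-θ)*(4*θ*(1-θ))^m := by
        rw [mul_pow, mul_pow, show (4:ℝ) = 2^2 by norm_num, ← pow_mul, pow_succ, pow_succ]
        ring

lemma hdiv_tendsto : Tendsto (fun t : ℕ => (t-1)/2) atTop atTop := by
  apply tendsto_atTop_atTop.2
  intro b
  exact ⟨2*b+1, fun t ht => by omega⟩

lemma binCdf_tendsto {θ : ℝ} (h0 : 0 ≤ θ) (h1 : θ ≤ 1) (hne : θ ≠ 1/2) :
    Tendsto (fun t : ℕ => binCdf t θ ((t-1)/2)) (atTop ⊓ 𝓟 {t | Odd t})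
      (𝓝 (Set.indicator (Set.Iic (1/2:ℝ)) 1 θ)) := by
  have h1θ : (0:ℝ) ≤ 1 - θ := by linarith
  have hr0 : 0 ≤ 4*θ*(1-θ) := by positivity
  have hd : (2*θ - 1) ≠ 0 := fun h => hne (by linarith)
  have hsq : 0 < (2*θ-1)^2 := by positivity
  have hr1 : 4*θ*(1-θ) < 1 := by nlinarith
  have hpow : Tendsto (fun t : ℕ => (4*θ*(1-θ))^((t-1)/2)) (atTop ⊓ 𝓟 {t | Odd t}) (𝓝 0) :=
    (((tendsto_pow_atTop_nhds_zero_of_lt_one hr0 hr1).comp hdiv_tendsto).mono_left inf_le_left)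
  have hk_le : ∀ t : ℕ, (t-1)/2 ≤ t := fun t => by omega
  rcases lt_or_gt_of_ne hne with hlt | hgt
  · -- θ < 1/2 : limit is 1
    simp only [Set.indicator_apply, Set.mem_Iic, Pi.one_apply]
    rw [if_pos hlt.le]
    apply tendsto_of_tendsto_of_tendsto_of_le_of_le'
      (g := fun t : ℕ => 1 - 2*θ*(4*θ*(1-θ))^((t-1)/2)) (h := fun _ => (1:ℝ))
    · simpa using tendsto_const_nhds.sub (hpow.const_mul (2*θ))
    · exact tendsto_const_nhds
    · rw [eventually_inf_principal]
      apply Eventually.of_forall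
      intro t ht
      obtain ⟨m, hm⟩ := ht
      have hmt : t = 2*m+1 := by omega
      have hk : (t-1)/2 = m := by omega
      rw [hmt, hk] at *
      have := tail_bound m h0 hlt.le
      linarith
    · exact Eventually.of_forall fun t => binCdf_le_one (hk_le t) h0 h1
  · -- θ > 1/2 : limit is 0
    simp only [Set.indicator_apply, Set.mem_Iic, Pi.one_apply]
    rw [if_neg (by linarith : ¬ θ ≤ 1/2)]
    apply tendsto_of_tendsto_of_tendsto_of_le_of_le'
      (g := fun _ : ℕ => (0:ℝ)) (h := fun t : ℕ => 2*(1-θ)*(4*θ*(1-θ))^((t-1)/2))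
    · exact tendsto_const_nhds
    · simpa using hpow.const_mul (2*(1-θ))
    · exact Eventually.of_forall fun t => binCdf_nonneg h0 h1
    · rw [eventually_inf_principal]
      apply Eventually.of_forall
      intro t ht
      obtain ⟨m, hm⟩ := ht
      have hmt : t = 2*m+1 := by omega
      rw [hmt, show (2*m+1-1)/2 = m from by omega]
      exact head_bound m hgt.le h1

lemma atom_zero (μ : Measure ℝ) [IsProbabilityMeasure μ] (G : ℝ → ℝ)
    (hG : ∀ x, G x = (μ (Set.Icc 0 x)).toReal)
    (hcont : ContinuousOn G (Set.Icc 0 1)) :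
    μ {(1/2:ℝ)} = 0 := by
  set x : ℕ → ℝ := fun n => 1/2 - 1/(n+2) with hxdef
  have hpos : ∀ n : ℕ, (0:ℝ) < (n:ℝ) + 2 := fun n => by positivity
  have hx_mem : ∀ n, x n ∈ Set.Icc (0:ℝ) 1 := by
    intro n
    have h2 : (1:ℝ)/((n:ℝ)+2) ≤ 1/2 := by
      apply div_le_div_of_nonneg_left (by norm_num) (by norm_num)
      have : (0:ℝ) ≤ (n:ℝ) := Nat.cast_nonneg n
      linarith
    have h3 : (0:ℝ) < (1:ℝ)/((n:ℝ)+2) := by positivity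
    constructor <;> simp only [hxdef] <;> [linarith; linarith]
  have hx_lt : ∀ n, x n < 1/2 := by
    intro n
    have h3 : (0:ℝ) < (1:ℝ)/((n:ℝ)+2) := by positivity
    simp only [hxdef]; linarith
  have hx_tendsto : Tendsto x atTop (𝓝 (1/2)) := by
    have h2 : Tendsto (fun n : ℕ => ((n:ℝ)+2)) atTop atTop :=
      tendsto_atTop_add_const_right atTop 2 tendsto_natCast_atTop_atTop
    have h3 : Tendsto (fun n : ℕ => 1/((n:ℝ)+2)) atTop (𝓝 0) := by
      rw [show (fun n : ℕ => 1/((n:ℝ)+2)) = (fun n : ℕ => ((n:ℝ)+2))⁻¹ from by funext n; exact one_div _]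
      exact h2.inv_tendsto_atTop
    have h4 : Tendsto (fun n : ℕ => 1/2 - 1/((n:ℝ)+2)) atTop (𝓝 (1/2 - 0)) :=
      tendsto_const_nhds.sub h3
    simpa [hxdef] using h4
  have hGx : Tendsto (fun n => G (x n)) atTop (𝓝 (G (1/2))) := by
    have hc : ContinuousWithinAt G (Set.Icc 0 1) (1/2) :=
      hcont _ (by constructor <;> norm_num)
    exact hc.tendsto.comp
      (tendsto_nhdsWithin_iff.2 ⟨hx_tendsto, Eventually.of_forall hx_mem⟩)
  have hineq : ∀ n, (μ {(1/2:ℝ)}).toReal ≤ G (1/2) - G (x n) := by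
    intro n
    have hdisj : Disjoint (Set.Icc 0 (x n)) {(1/2:ℝ)} := by
      rw [Set.disjoint_singleton_right, Set.mem_Icc]
      intro h
      exact absurd h.2 (not_le.2 (hx_lt n))
    have hun : μ (Set.Icc 0 (x n)) + μ {(1/2:ℝ)} ≤ μ (Set.Icc 0 (1/2)) := by
      rw [← measure_union hdisj (measurableSet_singleton _)]
      apply measure_mono
      apply Set.union_subset (Set.Icc_subset_Icc_right (hx_lt n).le)
      intro y hy
      rw [Set.mem_singleton_iff] at hy
      subst hy
      exact ⟨by norm_num, le_refl _⟩
    have h1 := ENNReal.toReal_mono (measure_ne_top μ _) hun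
    rw [ENNReal.toReal_add (measure_ne_top μ _) (measure_ne_top μ _)] at h1
    rw [hG, hG]
    linarith
  have hlim : Tendsto (fun n => G (1/2) - G (x n)) atTop (𝓝 0) := by
    have h5 : Tendsto (fun n => G (1/2) - G (x n)) atTop (𝓝 (G (1/2) - G (1/2))) :=
      tendsto_const_nhds.sub hGx
    simpa using h5
  have h0 : (μ {(1/2:ℝ)}).toReal ≤ 0 := ge_of_tendsto hlim (Eventually.of_forall hineq)
  have h0' : (μ {(1/2:ℝ)}).toReal = 0 := le_antisymm h0 ENNReal.toReal_nonneg
  rcases (ENNReal.toReal_eq_zero_iff _).1 h0' with h | h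
  · exact h
  · exact absurd h (measure_ne_top μ _)

lemma binCdf_continuous (t k : ℕ) : Continuous fun θ : ℝ => binCdf t θ k := by
  unfold binCdf
  apply continuous_finset_sum
  intro j _
  exact (continuous_const.mul (continuous_pow j)).mul
    ((continuous_const.sub continuous_id).pow _)

lemma integral_tendsto (μ : Measure ℝ) [IsProbabilityMeasure μ] (G : ℝ → ℝ)
    (hG : ∀ x, G x = (μ (Set.Icc 0 x)).toReal)
    (hcont : ContinuousOn G (Set.Icc 0 1)) :
    Tendsto (fun t : ℕ => ∫ θ in Set.Icc (0:ℝ) 1, binCdf t θ ((t-1)/2) ∂μ)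
      (atTop ⊓ 𝓟 {t | Odd t}) (𝓝 (G (1/2))) := by
  have hatom := atom_zero μ G hG hcont
  have h1 : ∫ θ in Set.Icc (0:ℝ) 1, (Set.Iic (1/2:ℝ)).indicator 1 θ ∂μ = G (1/2) := by
    rw [integral_indicator_one measurableSet_Iic, measureReal_def,
      Measure.restrict_apply measurableSet_Iic, hG]
    congr 2
    ext y
    simp only [Set.mem_inter_iff, Set.mem_Iic, Set.mem_Icc]
    constructor
    · rintro ⟨h1, h2, h3⟩; exact ⟨h2, h1⟩
    · rintro ⟨h1, h2⟩; exact ⟨h2, h1, by linarith⟩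
  rw [← h1]
  have hne_ae : ∀ᵐ θ ∂μ.restrict (Set.Icc 0 1), θ ≠ (1/2:ℝ) := by
    rw [ae_iff]
    simp only [ne_eq, not_not, Set.setOf_eq_eq_singleton]
    exact le_antisymm (le_trans (Measure.restrict_apply_le _ _) hatom.le) (zero_le)
  apply tendsto_integral_filter_of_dominated_convergence (bound := fun _ => (1:ℝ))
  · exact Eventually.of_forall fun t =>
      (binCdf_continuous t ((t-1)/2)).aestronglyMeasurable
  · apply Eventually.of_forall
    intro t
    filter_upwards [ae_restrict_mem measurableSet_Icc] with θ hθ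
    rw [Real.norm_eq_abs, abs_le]
    constructor
    · linarith [binCdf_nonneg (t := t) (k := (t-1)/2) hθ.1 hθ.2]
    · exact binCdf_le_one (by omega) hθ.1 hθ.2
  · exact integrable_const 1
  · filter_upwards [ae_restrict_mem measurableSet_Icc, hne_ae] with θ hθ hθne
    exact binCdf_tendsto hθ.1 hθ.2 hθne

/-- The test error `err_t` of the majority vote of `t` classifiers converges, as
`t → ∞` through odd values, to `err* = π₀(1 − G(1/2)) + π₁ G̃(1/2)`, where
`err_t = π₀·(1 − ∫₀¹ B(t,θ,(t−1)/2) dμ₀(θ)) + π₁·∫₀¹ B(t,θ,(t−1)/2) dμ₁(θ)`. -/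
theorem test_error_converges
    (μ₀ μ₁ : Measure ℝ) [IsProbabilityMeasure μ₀] [IsProbabilityMeasure μ₁]
    (hsupp₀ : μ₀ (Set.Icc 0 1) = 1) (hsupp₁ : μ₁ (Set.Icc 0 1) = 1)
    (G : ℝ → ℝ) (hG : ∀ x, G x = (μ₀ (Set.Icc 0 x)).toReal)
    (Gt : ℝ → ℝ) (hGt : ∀ x, Gt x = (μ₁ (Set.Icc 0 x)).toReal)
    (hGsmooth : ContDiffOn ℝ 2 G (Set.Icc 0 1))
    (hGtsmooth : ContDiffOn ℝ 2 Gt (Set.Icc 0 1))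
    (π₀ π₁ : ℝ) (hπ₀ : 0 ≤ π₀) (hπ₁ : 0 ≤ π₁) (hsum : π₀ + π₁ = 1)
    (err : ℕ → ℝ)
    (herr : ∀ t : ℕ, err t =
      π₀ * (1 - ∫ θ in Set.Icc (0:ℝ) 1, binCdf t θ ((t - 1) / 2) ∂μ₀)
      + π₁ * ∫ θ in Set.Icc (0:ℝ) 1, binCdf t θ ((t - 1) / 2) ∂μ₁) :
    Tendsto err (atTop ⊓ 𝓟 {t | Odd t})
      (𝓝 (π₀ * (1 - G (1/2)) + π₁ * Gt (1/2))) := by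
  have h₀ := integral_tendsto μ₀ G hG hGsmooth.continuousOn
  have h₁ := integral_tendsto μ₁ Gt hGt hGtsmooth.continuousOn
  have hmain : Tendsto
      (fun t : ℕ => π₀ * (1 - ∫ θ in Set.Icc (0:ℝ) 1, binCdf t θ ((t - 1) / 2) ∂μ₀)
        + π₁ * ∫ θ in Set.Icc (0:ℝ) 1, binCdf t θ ((t - 1) / 2) ∂μ₁)
      (atTop ⊓ 𝓟 {t | Odd t}) (𝓝 (π₀ * (1 - G (1/2)) + π₁ * Gt (1/2))) :=
    ((tendsto_const_nhds.sub h₀).const_mul π₀).add (h₁.const_mul π₁)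
  exact hmain.congr fun t => (herr t).symm
end

section
/- Let F : [0,1] → ℝ be twice continuously differentiable on [0,1]. For t ≥ 1 and z ∈ ℝ let θ(z;t) = 1/2 − (z/2)/√(z² + t), and define the Taylor remainder R(z;t) = F(θ(z;t)) − F(1/2) − F'(1/2)·θ'(0;t)·z, where θ'(0;t) = −1/(2√t) is the z-derivative of θ(·;t) at z = 0. Then there exists a constant C > 0 such that for all integers t ≥ 1 and all z ∈ ℝ, t·|R(z;t)| ≤ C·(1 + |z|³). -/
lemma trd_aux1 (z r s : ℝ) (hr1 : 1 ≤ r) (hrs : r ≤ s)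
    (hz2 : z ^ 2 = (s - r) * (s + r)) :
    r ^ 2 * (|z| * (s - r) / (2 * (r * s))) ≤ |z| ^ 3 / 4 := by
  have hr0 : (0:ℝ) < r := by linarith
  have hs0 : (0:ℝ) < s := by linarith
  have h3 : |z| ^ 3 = |z| * ((s - r) * (s + r)) := by
    rw [← hz2, ← sq_abs]; ring
  have ha : 0 ≤ |z| * (s - r) := mul_nonneg (abs_nonneg z) (by linarith)
  have hfac : 4 * r ^ 2 ≤ 2 * (r * s) * (s + r) := by
    nlinarith [mul_nonneg hr0.le (sq_nonneg (s - r)), sq_nonneg (s - r),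
      mul_le_mul_of_nonneg_left hrs hr0.le]
  rw [← mul_div_assoc, div_le_div_iff₀ (by positivity) (by norm_num)]
  nlinarith [mul_le_mul_of_nonneg_right hfac ha]

lemma trd_aux2 (z t s : ℝ) (ht : 0 ≤ t) (hs2 : s ^ 2 = z ^ 2 + t) (hs1 : 1 ≤ s) :
    t * (z ^ 2 / (4 * s ^ 2)) ≤ z ^ 2 / 4 := by
  rw [← mul_div_assoc, div_le_div_iff₀ (by positivity) (by norm_num)]
  nlinarith [sq_nonneg z, mul_nonneg (sq_nonneg z) (sq_nonneg z)]

lemma trd_aux3 (z : ℝ) : z ^ 2 ≤ 1 + |z| ^ 3 := by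
  nlinarith [sq_abs z, abs_nonneg z, mul_nonneg (abs_nonneg z) (sq_nonneg (|z| - 1)),
    sq_nonneg (2 * |z| - 1)]

lemma trd_aux4 (M A z : ℝ) (hM0 : 0 ≤ M) (hA0 : 0 ≤ A) :
    M * z ^ 2 / 4 + A * (|z| ^ 3 / 4) ≤ ((M + A) / 4 + 1) * (1 + |z| ^ 3) := by
  nlinarith [mul_nonneg hM0 (sub_nonneg.2 (trd_aux3 z)),
    mul_nonneg hA0 (pow_nonneg (abs_nonneg z) 3),
    pow_nonneg (abs_nonneg z) 3, mul_nonneg hM0 (pow_nonneg (abs_nonneg z) 3)]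

set_option maxHeartbeats 1600000 in
/-- Lemma 4: the scaled Taylor remainder is dominated by a fixed polynomial:
if `F` is twice continuously differentiable on `[0,1]`,
`θ(z;t) = 1/2 − (z/2)/√(z² + t)`, and
`R(z;t) = F(θ(z;t)) − F(1/2) − F'(1/2)·θ'(0;t)·z` with `θ'(0;t) = −1/(2√t)`,
then there is a constant `C > 0` such that `t·|R(z;t)| ≤ C·(1 + |z|³)` for all
integers `t ≥ 1` and all `z ∈ ℝ`. -/
theorem taylor_remainder_dominated
    (F : ℝ → ℝ) (hF : ContDiffOn ℝ 2 F (Set.Icc 0 1)) :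
    ∃ C > 0, ∀ t : ℕ, 1 ≤ t → ∀ z : ℝ,
      (t : ℝ) *
        |F (1/2 - (z/2) / Real.sqrt (z^2 + t)) - F (1/2)
          - deriv F (1/2) * (-(1 / (2 * Real.sqrt t))) * z|
      ≤ C * (1 + |z|^3) := by
  have hu : UniqueDiffOn ℝ (Set.Icc (0:ℝ) 1) := uniqueDiffOn_Icc (by norm_num)
  set f1 := derivWithin F (Set.Icc (0:ℝ) 1) with hf1def
  set f2 := derivWithin f1 (Set.Icc (0:ℝ) 1) with hf2def
  have hf1 : ContDiffOn ℝ 1 f1 (Set.Icc 0 1) := hF.derivWithin hu (by norm_num)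
  have hf2c : ContinuousOn f2 (Set.Icc 0 1) :=
    (hf1.derivWithin hu (by norm_num) : ContDiffOn ℝ 0 f2 (Set.Icc 0 1)).continuousOn
  obtain ⟨M, hM⟩ := (isCompact_Icc).exists_bound_of_continuousOn hf2c
  have hM' : ∀ x ∈ Set.Icc (0:ℝ) 1, |f2 x| ≤ M := by
    intro x hx; simpa [Real.norm_eq_abs] using hM x hx
  have hM0 : 0 ≤ M := le_trans (abs_nonneg _) (hM' 0 (by norm_num))
  set A := |deriv F (1/2 : ℝ)| with hAdef
  have hA0 : 0 ≤ A := abs_nonneg _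
  -- the derivative at 1/2
  have hd12 : f1 (1/2 : ℝ) = deriv F (1/2 : ℝ) :=
    derivWithin_of_mem_nhds (Icc_mem_nhds (by norm_num) (by norm_num))
  -- derivative of f1 within Icc is f2
  have hf1d : ∀ x ∈ Set.Icc (0:ℝ) 1, HasDerivWithinAt f1 (f2 x) (Set.Icc (0:ℝ) 1) x := by
    intro x hx
    exact ((hf1.differentiableOn one_ne_zero) x hx).hasDerivWithinAt
  -- f1 is Lipschitz with constant M
  have hlip : ∀ x ∈ Set.Icc (0:ℝ) 1, |f1 x - f1 (1/2 : ℝ)| ≤ M * |x - 1/2| := by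
    intro x hx
    have := (convex_Icc (0:ℝ) 1).norm_image_sub_le_of_norm_hasDerivWithin_le hf1d
      hM (by constructor <;> norm_num : (1/2:ℝ) ∈ Set.Icc (0:ℝ) 1) hx
    simpa [Real.norm_eq_abs] using this
  refine ⟨(M + A)/4 + 1, by positivity, ?_⟩
  intro t ht z
  have ht1 : (1:ℝ) ≤ (t:ℝ) := by exact_mod_cast ht
  obtain ⟨s, hsdef⟩ : ∃ s : ℝ, Real.sqrt (z^2 + (t:ℝ)) = s := ⟨_, rfl⟩
  obtain ⟨r, hrdef⟩ : ∃ r : ℝ, Real.sqrt (t:ℝ) = r := ⟨_, rfl⟩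
  rw [hsdef, hrdef]
  have hr1 : (1:ℝ) ≤ r := by
    rw [← hrdef]
    calc (1:ℝ) = Real.sqrt 1 := by simp
    _ ≤ Real.sqrt (t:ℝ) := Real.sqrt_le_sqrt ht1
  have hr2 : r^2 = (t:ℝ) := by rw [← hrdef]; exact Real.sq_sqrt (by linarith)
  have hs2 : s^2 = z^2 + (t:ℝ) := by rw [← hsdef]; exact Real.sq_sqrt (by positivity)
  have hrs : r ≤ s := by
    rw [← hrdef, ← hsdef]; exact Real.sqrt_le_sqrt (by nlinarith [sq_nonneg z])
  have hs1 : (1:ℝ) ≤ s := le_trans hr1 hrs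
  have hs0 : (0:ℝ) < s := by linarith
  have hr0 : (0:ℝ) < r := by linarith
  have hzs : |z| ≤ s := by
    rw [← hsdef, ← Real.sqrt_sq_eq_abs]
    exact Real.sqrt_le_sqrt (by linarith)
  obtain ⟨θ, hθdef⟩ : ∃ θ : ℝ, 1/2 - z/2/s = θ := ⟨_, rfl⟩
  rw [hθdef]
  have hθmem : θ ∈ Set.Icc (0:ℝ) 1 := by
    have h1 : (z/2)/s ≤ 1/2 := by
      rw [div_le_iff₀ hs0]
      nlinarith [le_abs_self z]
    have h2 : -(1/2 : ℝ) ≤ (z/2)/s := by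
      rw [le_div_iff₀ hs0]
      nlinarith [neg_abs_le z]
    constructor <;> rw [← hθdef] <;> linarith
  have hΔ : θ - 1/2 = -(z/(2*s)) := by
    rw [← hθdef]; field_simp; ring
  have habsΔ : |θ - 1/2| = |z|/(2*s) := by
    rw [hΔ, abs_neg, abs_div, abs_of_pos (by linarith : (0:ℝ) < 2*s)]
  -- Taylor-type bound on the segment between 1/2 and θ
  have hsub : Set.uIcc θ (1/2 : ℝ) ⊆ Set.Icc (0:ℝ) 1 :=
    Set.uIcc_subset_Icc hθmem (by constructor <;> norm_num)
  have hg : ∀ x ∈ Set.uIcc θ (1/2:ℝ),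
      HasDerivWithinAt (fun y => F y - f1 (1/2) * y) (f1 x - f1 (1/2))
        (Set.uIcc θ (1/2:ℝ)) x := by
    intro x hx
    have h1 : HasDerivWithinAt F (f1 x) (Set.uIcc θ (1/2:ℝ)) x :=
      (((hF.differentiableOn (by norm_num)) x (hsub hx)).hasDerivWithinAt).mono hsub
    have h2 : HasDerivWithinAt (fun y => f1 (1/2:ℝ) * y) (f1 (1/2:ℝ) * 1)
        (Set.uIcc θ (1/2:ℝ)) x := (hasDerivWithinAt_id x _).const_mul _
    have h3 := h1.sub h2
    rw [mul_one] at h3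
    exact h3
  have hgbound : ∀ x ∈ Set.uIcc θ (1/2:ℝ), ‖f1 x - f1 (1/2:ℝ)‖ ≤ M * |θ - 1/2| := by
    intro x hx
    have hxm : |x - 1/2| ≤ |θ - 1/2| := by
      rcases Set.mem_uIcc.mp hx with ⟨h1, h2⟩ | ⟨h1, h2⟩ <;>
        rw [abs_le] <;> constructor <;>
        linarith [le_abs_self (θ - 1/2), neg_abs_le (θ - 1/2), abs_nonneg (θ - 1/2)]
    calc ‖f1 x - f1 (1/2:ℝ)‖ = |f1 x - f1 (1/2:ℝ)| := rfl
    _ ≤ M * |x - 1/2| := hlip x (hsub hx)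
    _ ≤ M * |θ - 1/2| := by nlinarith
  have htaylor : |F θ - F (1/2) - f1 (1/2:ℝ) * (θ - 1/2)| ≤ M * |θ - 1/2| * |θ - 1/2| := by
    have h := (convex_uIcc θ (1/2:ℝ)).norm_image_sub_le_of_norm_hasDerivWithin_le hg
      hgbound Set.right_mem_uIcc Set.left_mem_uIcc
    simp only [Real.norm_eq_abs] at h
    calc |F θ - F (1/2) - f1 (1/2:ℝ) * (θ - 1/2)|
        = |(F θ - f1 (1/2) * θ) - (F (1/2) - f1 (1/2) * (1/2))| := by congr 1; ring
      _ ≤ M * |θ - 1/2| * |θ - 1/2| := h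
  -- the error from linearizing θ
  obtain ⟨E, hEdef⟩ : ∃ E : ℝ, (θ - 1/2) + z/(2*r) = E := ⟨_, rfl⟩
  have hEeq : E = z * (s - r)/(2*(r*s)) := by
    rw [← hEdef, hΔ]; field_simp; ring
  have habsE : |E| = |z| * (s - r)/(2*(r*s)) := by
    rw [hEeq, abs_div, abs_mul, abs_of_nonneg (by linarith : (0:ℝ) ≤ s - r),
      abs_of_pos (by positivity : (0:ℝ) < 2*(r*s))]
  have hz2 : z^2 = (s - r)*(s + r) := by linear_combination hr2 - hs2
  have hz3 : |z|^3 = |z| * ((s - r)*(s + r)) := by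
    rw [← hz2, ← sq_abs]; ring
  -- bound t * |E|
  have hkey : (t:ℝ) * |E| ≤ |z|^3/4 := by
    rw [habsE, ← hr2]
    exact trd_aux1 z r s hr1 hrs hz2
  -- bound t * first Taylor term
  have hT1 : (t:ℝ) * (M * |θ - 1/2| * |θ - 1/2|) ≤ M * z^2 / 4 := by
    rw [habsΔ]
    have h1 : |z|/(2*s) * (|z|/(2*s)) = z^2/(4*s^2) := by
      rw [div_mul_div_comm, ← sq_abs]; ring_nf
    have h2 : (t:ℝ) * (z^2/(4*s^2)) ≤ z^2/4 :=
      trd_aux2 z (t:ℝ) s (by linarith) hs2 hs1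
    calc (t:ℝ) * (M * (|z|/(2*s)) * (|z|/(2*s))) = M * ((t:ℝ) * (z^2/(4*s^2))) := by
          rw [mul_assoc M, h1]; ring
      _ ≤ M * (z^2/4) := mul_le_mul_of_nonneg_left h2 hM0
      _ = M * z^2 / 4 := by ring
  -- put everything together
  have hRsplit : F θ - F (1/2) - deriv F (1/2) * (-(1 / (2 * r))) * z
      = (F θ - F (1/2) - f1 (1/2:ℝ) * (θ - 1/2)) + f1 (1/2:ℝ) * E := by
    rw [hd12, ← hEdef]
    field_simp
    ring
  have habsR : |F θ - F (1/2) - deriv F (1/2) * (-(1 / (2 * r))) * z|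
      ≤ M * |θ - 1/2| * |θ - 1/2| + A * |E| := by
    rw [hRsplit]
    calc |(F θ - F (1/2) - f1 (1/2:ℝ) * (θ - 1/2)) + f1 (1/2:ℝ) * E|
        ≤ |F θ - F (1/2) - f1 (1/2:ℝ) * (θ - 1/2)| + |f1 (1/2:ℝ) * E| := abs_add_le _ _
      _ ≤ M * |θ - 1/2| * |θ - 1/2| + A * |E| := by
          have h5 : |f1 (1/2:ℝ) * E| = A * |E| := by rw [hAdef, abs_mul, hd12]
          rw [h5]
          exact add_le_add htaylor le_rfl
  have ht0 : (0:ℝ) < (t:ℝ) := lt_of_lt_of_le one_pos ht1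
  calc (t:ℝ) * |F θ - F (1/2) - deriv F (1/2) * (-(1 / (2 * r))) * z|
      ≤ (t:ℝ) * (M * |θ - 1/2| * |θ - 1/2| + A * |E|) :=
        mul_le_mul_of_nonneg_left habsR (le_of_lt ht0)
    _ = (t:ℝ) * (M * |θ - 1/2| * |θ - 1/2|) + A * ((t:ℝ) * |E|) := by ring
    _ ≤ M * z^2 / 4 + A * (|z|^3 / 4) :=
        add_le_add hT1 (mul_le_mul_of_nonneg_left hkey hA0)
    _ ≤ ((M + A)/4 + 1) * (1 + |z|^3) := trd_aux4 M A z hM0 hA0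
end
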